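/- arXiv:2605.31568 — 4 statements merged into one kernel-verified Lean document; each statement's English description precedes it below -/
import Mathlib

section
/- Let π be a finite sequence of points x_0, x_1, ..., x_n in ℝ^d such that consecutive points have Euclidean distance at most 1, and such that any two non-consecutive points have Euclidean distance strictly greater than 1 (a 'geodesic' path in a unit-distance graph). Then for any point z ∈ ℝ^d, the number of points of π lying in the unit cube z + [-1/2, 1/2]^d is at most C_d := 2^{d+1} / vol(B(0,1/2)), where vol(B(0,1/2)) is the volume of the Euclidean ball of radius 1/2 in ℝ^d. -/
/-!
Two indices of the same parity are never consecutive, so the corresponding points of a geodesic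
path are more than `1` apart. Within one parity class, the open balls of radius `1/2` around the
points lying in the unit cube are therefore disjoint, and they all lie in the concentric cube of
side `2`; comparing volumes, each class has at most `2^d / vol(B(0,1/2))` such points.
-/

open MeasureTheory

/-- The closed unit cube centered at `z` in `ℝ^d`. -/
def unitCube {d : ℕ} (z : EuclideanSpace ℝ (Fin d)) : Set (EuclideanSpace ℝ (Fin d)) :=
  {y | ∀ i, |y i - z i| ≤ 1 / 2}

open ENNReal Metric

theorem card_mul_measure_ball_le_of_pairwiseDisjoint {E ι : Type*} [NormedAddCommGroup E]
    [MeasurableSpace E] [BorelSpace E] (μ : Measure E) [μ.IsAddHaarMeasure]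
    (T : Finset ι) (x : ι → E) {r : ℝ} {K : Set E}
    (hdisj : (T : Set ι).PairwiseDisjoint fun i => ball (x i) r)
    (hK : ∀ i ∈ T, ball (x i) r ⊆ K) :
    (T.card : ℝ≥0∞) * μ (ball 0 r) ≤ μ K :=
  calc (T.card : ℝ≥0∞) * μ (ball 0 r) = ∑ i ∈ T, μ (ball (x i) r) := by
        simp only [Measure.addHaar_ball_center, Finset.sum_const, nsmul_eq_mul]
    _ = μ (⋃ i ∈ T, ball (x i) r) :=
        (measure_biUnion_finset hdisj fun _ _ => measurableSet_ball).symm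
    _ ≤ μ K := measure_mono (Set.iUnion₂_subset hK)

theorem EuclideanSpace.volume_setOf_abs_sub_le {d : ℕ} (z : EuclideanSpace ℝ (Fin d))
    {r : ℝ} (hr : 0 ≤ r) :
    volume {y : EuclideanSpace ℝ (Fin d) | ∀ k, |y k - z k| ≤ r} = ENNReal.ofReal (2 * r) ^ d := by
  have hpre : {y : EuclideanSpace ℝ (Fin d) | ∀ k, |y k - z k| ≤ r} =
      WithLp.ofLp ⁻¹' closedBall (WithLp.ofLp z) r := by
    ext y
    simp [dist_pi_le_iff hr, Real.dist_eq]
  rw [hpre, (PiLp.volume_preserving_ofLp (Fin d)).measure_preimage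
    measurableSet_closedBall.nullMeasurableSet, Real.volume_pi_closedBall _ hr,
    Fintype.card_fin, ENNReal.ofReal_pow (by positivity)]

theorem ball_subset_setOf_abs_sub_le_of_mem_unitCube {d : ℕ} {z x : EuclideanSpace ℝ (Fin d)}
    (hx : x ∈ unitCube z) : ball x (1 / 2) ⊆ {y | ∀ k, |y k - z k| ≤ 1} := by
  intro y hy k
  have hyx : |y k - x k| < 1 / 2 :=
    (PiLp.dist_apply_le y x k).trans_lt (mem_ball.mp hy)
  linarith [abs_sub_le (y k) (x k) (z k), hx k]

theorem card_le_of_mem_unitCube_of_one_le_dist {d : ℕ} {ι : Type*} (T : Finset ι)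
    (x : ι → EuclideanSpace ℝ (Fin d)) (z : EuclideanSpace ℝ (Fin d))
    (hcube : ∀ i ∈ T, x i ∈ unitCube z)
    (hsep : ∀ i ∈ T, ∀ j ∈ T, i ≠ j → 1 ≤ dist (x i) (x j)) :
    (T.card : ℝ) ≤ 2 ^ d / (volume (ball (0 : EuclideanSpace ℝ (Fin d)) (1 / 2))).toReal := by
  have hpacking : (T.card : ℝ≥0∞) * volume (ball (0 : EuclideanSpace ℝ (Fin d)) (1 / 2))
      ≤ 2 ^ d := by
    have := card_mul_measure_ball_le_of_pairwiseDisjoint volume T x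
      (fun i hi j hj hij => ball_disjoint_ball (by linarith [hsep i hi j hj hij]))
      (fun i hi => ball_subset_setOf_abs_sub_le_of_mem_unitCube (hcube i hi))
    rwa [EuclideanSpace.volume_setOf_abs_sub_le z zero_le_one, mul_one, ofReal_ofNat] at this
  have hvol : 0 < (volume (ball (0 : EuclideanSpace ℝ (Fin d)) (1 / 2))).toReal :=
    toReal_pos (measure_ball_pos volume 0 (by norm_num)).ne' measure_ball_lt_top.ne
  rw [le_div_iff₀ hvol]
  simpa using toReal_mono (by simp) hpacking

theorem one_lt_dist_of_even_iff {X : Type*} [PseudoMetricSpace X] {m : ℕ} {π : Fin m → X}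
    (hsep : ∀ i j : Fin m, (i : ℕ) + 2 ≤ (j : ℕ) → 1 < dist (π i) (π j))
    {i j : Fin m} (hij : i ≠ j) (hpar : Even (i : ℕ) ↔ Even (j : ℕ)) :
    1 < dist (π i) (π j) := by
  simp only [Nat.even_iff] at hpar
  rcases lt_or_gt_of_ne (Fin.val_ne_of_ne hij) with h | h
  · exact hsep i j (by omega)
  · exact dist_comm (π i) (π j) ▸ hsep j i (by omega)

theorem geodesic_points_in_cube_le_general
    {d : ℕ} {n : ℕ} (π : Fin (n + 1) → EuclideanSpace ℝ (Fin d))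
    (hsep : ∀ i j : Fin (n + 1), (i : ℕ) + 2 ≤ (j : ℕ) → 1 < dist (π i) (π j))
    (z : EuclideanSpace ℝ (Fin d)) :
    ((Set.range π ∩ unitCube z).ncard : ℝ) ≤
      2 ^ (d + 1) / (volume (Metric.ball (0 : EuclideanSpace ℝ (Fin d)) (1 / 2))).toReal := by
  classical
  set V := (volume (ball (0 : EuclideanSpace ℝ (Fin d)) (1 / 2))).toReal
  set S := Finset.univ.filter fun i => π i ∈ unitCube z
  have hcard : (Set.range π ∩ unitCube z).ncard ≤ S.card := by
    have hS : (S : Set (Fin (n + 1))) = π ⁻¹' unitCube z := by simp [S, Set.preimage]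
    rw [← Set.image_preimage_eq_range_inter, ← Set.ncard_coe_finset, hS]
    exact Set.ncard_image_le (Set.toFinite _)
  have hclass (P : Fin (n + 1) → Prop) [DecidablePred P] (hP : ∀ i j, P i → P j →
      (Even (i : ℕ) ↔ Even (j : ℕ))) : ((S.filter P).card : ℝ) ≤ 2 ^ d / V :=
    card_le_of_mem_unitCube_of_one_le_dist _ π z
      (fun i hi => (Finset.mem_filter.mp (Finset.mem_filter.mp hi).1).2)
      (fun i hi j hj hij => (one_lt_dist_of_even_iff hsep hij
        (hP i j (Finset.mem_filter.mp hi).2 (Finset.mem_filter.mp hj).2)).le)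
  calc ((Set.range π ∩ unitCube z).ncard : ℝ)
      ≤ S.card := by exact_mod_cast hcard
    _ = ((S.filter fun i : Fin (n + 1) => Even (i : ℕ)).card : ℝ)
          + (S.filter fun i : Fin (n + 1) => ¬Even (i : ℕ)).card := by
        exact_mod_cast (Finset.card_filter_add_card_filter_not _).symm
    _ ≤ 2 ^ d / V + 2 ^ d / V := add_le_add (hclass _ fun _ _ hi hj => iff_of_true hi hj)
        (hclass _ fun _ _ hi hj => iff_of_false hi hj)
    _ = 2 ^ (d + 1) / V := by ring

/-- If `π = x_0, …, x_n` is a path in `ℝ^d` whose consecutive points are at Euclidean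
distance at most `1` and whose non-consecutive points are at distance strictly greater
than `1` (a geodesic in a unit-distance graph), then for every `z ∈ ℝ^d` the number of
points of `π` in the unit cube centered at `z` is at most
`C_d = 2^(d+1) / vol(B(0, 1/2))`. -/
theorem geodesic_points_in_cube_le
    {d : ℕ} {n : ℕ} (π : Fin (n + 1) → EuclideanSpace ℝ (Fin d))
    (hstep : ∀ i : Fin n, dist (π i.castSucc) (π i.succ) ≤ 1)
    (hsep : ∀ i j : Fin (n + 1), (i : ℕ) + 2 ≤ (j : ℕ) → 1 < dist (π i) (π j))
    (z : EuclideanSpace ℝ (Fin d)) :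
    ((Set.range π ∩ unitCube z).ncard : ℝ) ≤
      2 ^ (d + 1) / (volume (Metric.ball (0 : EuclideanSpace ℝ (Fin d)) (1 / 2))).toReal :=
  geodesic_points_in_cube_le_general π hsep z
end

section
/- Let X be a finite subset of ℝ^d, x ∈ ℝ^d, M ≥ 1, and define D̃(X) := min( M·‖x‖ , inf over connected pairs p, q ∈ X of [d_{G(X)}(p,q) + M(‖p‖ + ‖x - q‖)] ). Suppose the infimum is attained by a pair (p̃, q̃) with D̃(X) < M‖x‖, and let π be a geodesic from p̃ to q̃ in G(X). Then every vertex v of π satisfies ‖v‖ + ‖x - v‖ ≤ M‖x‖. -/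
open MeasureTheory

/-- The chemical (graph) distance between `p` and `q` in the unit-distance graph on the
point set `S ⊆ ℝ^d`: the least number of edges in a path within `S` joining `p` and `q`
whose consecutive points are at Euclidean distance at most `1`.  It equals `⊤` when no
such path exists. -/
noncomputable def gdist {d : ℕ} (S : Set (EuclideanSpace ℝ (Fin d)))
    (p q : EuclideanSpace ℝ (Fin d)) : ℕ∞ :=
  sInf {n : ℕ∞ | ∃ (k : ℕ) (c : Fin (k + 1) → EuclideanSpace ℝ (Fin d)),
    n = (k : ℕ∞) ∧ c 0 = p ∧ c (Fin.last k) = q ∧ (∀ i, c i ∈ S) ∧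
    ∀ i : Fin k, dist (c i.castSucc) (c i.succ) ≤ 1}

/-- The truncated distance functional
`D̃(S) = min( M‖x‖ , inf { d_{G(S)}(p,q) + M(‖p‖ + ‖x - q‖) : p, q ∈ S connected } )`. -/
noncomputable def Dtil {d : ℕ} (x : EuclideanSpace ℝ (Fin d)) (M : ℝ)
    (S : Set (EuclideanSpace ℝ (Fin d))) : ℝ :=
  sInf (insert (M * ‖x‖) {r : ℝ | ∃ p ∈ S, ∃ q ∈ S, gdist S p q ≠ ⊤ ∧
    r = ((gdist S p q).toNat : ℝ) + M * (‖p‖ + ‖x - q‖)})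

/-- If the infimum defining `D̃(X)` is attained by a connected pair `(p̃, q̃)` with
`D̃(X) < M‖x‖` and `M ≥ 1`, then every vertex `v` of a geodesic `π` from `p̃` to `q̃`
in the unit-distance graph on `X` satisfies `‖v‖ + ‖x - v‖ ≤ M‖x‖`. -/
theorem geodesic_vertices_in_region
    {d : ℕ} (X : Set (EuclideanSpace ℝ (Fin d))) (hX : X.Finite)
    (x : EuclideanSpace ℝ (Fin d)) (M : ℝ) (hM : 1 ≤ M)
    (ptil qtil : EuclideanSpace ℝ (Fin d)) (hp : ptil ∈ X) (hq : qtil ∈ X)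
    (hconn : gdist X ptil qtil ≠ ⊤)
    (hmin : Dtil x M X = ((gdist X ptil qtil).toNat : ℝ) + M * (‖ptil‖ + ‖x - qtil‖))
    (hlt : Dtil x M X < M * ‖x‖)
    {k : ℕ} (π : Fin (k + 1) → EuclideanSpace ℝ (Fin d))
    (hmem : ∀ i, π i ∈ X)
    (h0 : π 0 = ptil) (hlast : π (Fin.last k) = qtil)
    (hstep : ∀ i : Fin k, dist (π i.castSucc) (π i.succ) ≤ 1)
    (hgeo : (k : ℕ∞) = gdist X ptil qtil) :
    ∀ i, ‖π i‖ + ‖x - π i‖ ≤ M * ‖x‖ := by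
  -- distance from start
  have hfwd : ∀ i : Fin (k + 1), dist (π 0) (π i) ≤ (i.val : ℝ) := by
    intro i
    induction i using Fin.induction with
    | zero => simp
    | succ j ih =>
        calc dist (π 0) (π j.succ)
            ≤ dist (π 0) (π j.castSucc) + dist (π j.castSucc) (π j.succ) :=
              dist_triangle _ _ _
          _ ≤ (j.castSucc.val : ℝ) + 1 := add_le_add ih (hstep j)
          _ = (j.succ.val : ℝ) := by simp
  -- distance to end
  have hbwd : ∀ i : Fin (k + 1), dist (π i) (π (Fin.last k)) ≤ (k : ℝ) - i.val := by
    intro i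
    induction i using Fin.reverseInduction with
    | last => simp
    | cast j ih =>
        calc dist (π j.castSucc) (π (Fin.last k))
            ≤ dist (π j.castSucc) (π j.succ) + dist (π j.succ) (π (Fin.last k)) :=
              dist_triangle _ _ _
          _ ≤ 1 + ((k : ℝ) - j.succ.val) := add_le_add (hstep j) ih
          _ = (k : ℝ) - j.castSucc.val := by
              have : (j : ℕ) < k := j.isLt
              simp only [Fin.val_succ, Fin.coe_castSucc]
              push_cast
              ring
  have htoNat : ((gdist X ptil qtil).toNat : ℝ) = (k : ℝ) := by
    rw [← hgeo]; simp
  intro i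
  have h1 : ‖π i‖ ≤ ‖ptil‖ + (i.val : ℝ) := by
    have := hfwd i
    rw [h0] at this
    have hd : ‖π i‖ ≤ ‖ptil‖ + dist ptil (π i) := by
      have := norm_le_norm_add_norm_sub' ptil (π i)
      rw [dist_eq_norm]
      linarith [norm_sub_norm_le (π i) ptil, dist_eq_norm (π i) ptil,
        (dist_comm ptil (π i) : dist ptil (π i) = dist (π i) ptil),
        (norm_sub_rev (π i) ptil : ‖π i - ptil‖ = ‖ptil - π i‖)]
    calc ‖π i‖ ≤ ‖ptil‖ + dist ptil (π i) := hd
      _ ≤ ‖ptil‖ + (i.val : ℝ) := by linarith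
  have h2 : ‖x - π i‖ ≤ ‖x - qtil‖ + ((k : ℝ) - i.val) := by
    have hb := hbwd i
    rw [hlast] at hb
    have : ‖x - π i‖ ≤ ‖x - qtil‖ + ‖qtil - π i‖ := by
      have := norm_add_le (x - qtil) (qtil - π i)
      simpa [sub_add_sub_cancel] using this
    have hq' : ‖qtil - π i‖ = dist (π i) qtil := by
      rw [dist_eq_norm, norm_sub_rev]
    linarith [hb, this, hq'.le, hq'.ge]
  have hnn : 0 ≤ ‖ptil‖ + ‖x - qtil‖ := by positivity
  have key : ‖π i‖ + ‖x - π i‖ ≤ Dtil x M X := by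
    rw [hmin, htoNat]
    nlinarith [h1, h2, hnn, hM]
  linarith
end

section
/- Let X ⊂ ℝ^d be a finite point set and G(X) its unit-distance graph. Suppose p, q ∈ X are connected in G(X) and let π be a geodesic from p to q contained in a region R ⊂ ℝ^d. Then the number of edges of π satisfies |π| ≤ C_d · vol(R + B(0, 1/2)), where C_d = 2^{d+1}/vol(B(0,1/2)) and R + B(0,1/2) is the Minkowski sum. -/
open MeasureTheory

/-!
The vertices of a geodesic are almost 1-separated: if two of them, two or more steps apart, were
within distance 1, jumping directly from one to the other would give a shorter path. Hence the
even-indexed vertices, more than half of all edges in number, are centres of pairwise disjoint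
balls of radius 1/2 inside `R + B(0, 1/2)`, and comparing volumes bounds their number.
-/

open Metric Pointwise in
theorem card_mul_measure_ball_le_measure_add_ball {E ι : Type*} [NormedAddCommGroup E]
    [MeasurableSpace E] [BorelSpace E] (μ : Measure E) [μ.IsAddHaarMeasure] [Fintype ι]
    {R : Set E} {r : ℝ} (x : ι → E) (hsep : Pairwise fun i j => r + r ≤ dist (x i) (x j))
    (hR : ∀ i, x i ∈ R) :
    Fintype.card ι * μ (ball 0 r) ≤ μ (R + ball 0 r) :=
  calc (Fintype.card ι : ENNReal) * μ (ball 0 r) = ∑ i, μ (ball (x i) r) := by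
        simp [Measure.addHaar_ball_center]
    _ = μ (⋃ i, ball (x i) r) :=
        ((measure_iUnion (fun _ _ hij => ball_disjoint_ball (hsep hij))
          (fun _ => measurableSet_ball)).trans (tsum_fintype _)).symm
    _ ≤ μ (R + ball 0 r) := measure_mono <| Set.iUnion_subset fun i => by
        rw [← singleton_add_ball_zero]
        exact Set.add_subset_add_right (Set.singleton_subset_iff.2 (hR i))

section UnitDistancePaths

variable {d : ℕ} {S : Set (EuclideanSpace ℝ (Fin d))}

theorem gdist_le_of_path (c : ℕ → EuclideanSpace ℝ (Fin d)) {m : ℕ} (hS : ∀ i ≤ m, c i ∈ S)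
    (hstep : ∀ i < m, dist (c i) (c (i + 1)) ≤ 1) : gdist S (c 0) (c m) ≤ m :=
  sInf_le ⟨m, fun i => c i, rfl, rfl, rfl, fun i => hS i i.is_le, fun i => hstep i i.isLt⟩

theorem gdist_le_of_shortcut (c : ℕ → EuclideanSpace ℝ (Fin d)) {k a b : ℕ} (hab : a < b)
    (hb : b ≤ k) (hS : ∀ i ≤ k, c i ∈ S) (hstep : ∀ i < k, dist (c i) (c (i + 1)) ≤ 1)
    (hshort : dist (c a) (c b) ≤ 1) : gdist S (c 0) (c k) ≤ (a + 1 + (k - b) : ℕ) := by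
  let c' : ℕ → EuclideanSpace ℝ (Fin d) := fun t => if t ≤ a then c t else c (t - a - 1 + b)
  have hfirst : c' 0 = c 0 := if_pos a.zero_le
  have hlast : c' (a + 1 + (k - b)) = c k := by
    simp only [c', show ¬a + 1 + (k - b) ≤ a by omega, if_false]
    congr 1
    omega
  rw [← hfirst, ← hlast]
  refine gdist_le_of_path c' (fun i _ => ?_) fun t ht => ?_
  · unfold c'
    split_ifs <;> exact hS _ (by omega)
  rcases lt_trichotomy t a with h | rfl | h
  · simpa [c', h.le, Nat.succ_le_of_lt h] using hstep t (by omega)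
  · simpa [c'] using hshort
  · have hsucc : t + 1 - a - 1 + b = t - a - 1 + b + 1 := by omega
    simp only [c', if_neg (show ¬t ≤ a by omega), if_neg (show ¬t + 1 ≤ a by omega), hsucc]
    exact hstep _ (by omega)

theorem one_lt_dist_of_le_gdist {k : ℕ} (π : Fin (k + 1) → EuclideanSpace ℝ (Fin d))
    (hS : ∀ i, π i ∈ S) (hstep : ∀ i : Fin k, dist (π i.castSucc) (π i.succ) ≤ 1)
    (hgeo : (k : ℕ∞) ≤ gdist S (π 0) (π (Fin.last k))) {a b : Fin (k + 1)}
    (hab : a + 2 ≤ (b : ℕ)) :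
    1 < dist (π a) (π b) := by
  let c : ℕ → EuclideanSpace ℝ (Fin d) := fun i => π ⟨min i k, by omega⟩
  have hc : ∀ i (hi : i < k + 1), c i = π ⟨i, hi⟩ := fun i hi => by
    simp only [c, min_eq_left (Nat.le_of_lt_succ hi)]
  by_contra! hshort
  rw [← hc a a.isLt, ← hc b b.isLt] at hshort
  have hshortcut := gdist_le_of_shortcut c (by omega) (Nat.le_of_lt_succ b.isLt)
    (fun i hi => hc i (by omega) ▸ hS _)
    (fun i hi => by rw [hc i (by omega), hc (i + 1) (by omega)]; exact hstep ⟨i, hi⟩) hshort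
  rw [hc 0 k.succ_pos, hc k k.lt_succ_self] at hshortcut
  have := hgeo.trans hshortcut
  norm_cast at this
  omega

end UnitDistancePaths

open Pointwise in
theorem geodesic_length_le_volume_general
    {d : ℕ} (X : Set (EuclideanSpace ℝ (Fin d)))
    (R : Set (EuclideanSpace ℝ (Fin d)))
    (p q : EuclideanSpace ℝ (Fin d))
    {k : ℕ} (π : Fin (k + 1) → EuclideanSpace ℝ (Fin d))
    (hmem : ∀ i, π i ∈ X) (hR : ∀ i, π i ∈ R)
    (h0 : π 0 = p) (hlast : π (Fin.last k) = q)
    (hstep : ∀ i : Fin k, dist (π i.castSucc) (π i.succ) ≤ 1)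
    (hgeo : (k : ℕ∞) = gdist X p q) :
    (k : ENNReal) ≤
      (2 ^ (d + 1) / volume (Metric.ball (0 : EuclideanSpace ℝ (Fin d)) (1 / 2))) *
        volume (R + Metric.ball (0 : EuclideanSpace ℝ (Fin d)) (1 / 2)) := by
  subst h0 hlast
  let x : Fin (k / 2 + 1) → EuclideanSpace ℝ (Fin d) := fun s => π ⟨2 * s, by omega⟩
  have hxsep : Pairwise fun s t => (1 / 2 : ℝ) + 1 / 2 ≤ dist (x s) (x t) := by
    intro s t hst
    rw [add_halves]
    rcases Fin.lt_or_lt_of_ne hst with h | h <;> rw [Fin.lt_def] at h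
    · exact (one_lt_dist_of_le_gdist π hmem hstep hgeo.le (by dsimp only; omega)).le
    · rw [dist_comm]
      exact (one_lt_dist_of_le_gdist π hmem hstep hgeo.le (by dsimp only; omega)).le
  have hpack := card_mul_measure_ball_le_measure_add_ball volume x hxsep fun s => hR _
  rw [Fintype.card_fin] at hpack
  have hball : volume (Metric.ball (0 : EuclideanSpace ℝ (Fin d)) (1 / 2)) ≠ 0 :=
    (Metric.measure_ball_pos _ _ (by norm_num)).ne'
  rw [← ENNReal.mul_div_right_comm,
    ENNReal.le_div_iff_mul_le (Or.inl hball) (Or.inl measure_ball_lt_top.ne)]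
  calc (k : ENNReal) * _ ≤ 2 * ((k / 2 + 1 : ℕ) * _) := by
        rw [← mul_assoc]; gcongr; norm_cast; omega
    _ ≤ 2 * _ := by gcongr
    _ ≤ 2 ^ (d + 1) * _ := by gcongr; exact le_self_pow₀ one_le_two (by omega)

open Pointwise in
/-- A geodesic `π` from `p` to `q` in the unit-distance graph on a finite set `X ⊆ ℝ^d`
which is contained in a region `R` has at most `C_d · vol(R + B(0,1/2))` edges, where
`C_d = 2^(d+1) / vol(B(0,1/2))` and `R + B(0,1/2)` is the Minkowski sum. -/
theorem geodesic_length_le_volume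
    {d : ℕ} (X : Set (EuclideanSpace ℝ (Fin d))) (hX : X.Finite)
    (R : Set (EuclideanSpace ℝ (Fin d)))
    (p q : EuclideanSpace ℝ (Fin d)) (hp : p ∈ X) (hq : q ∈ X)
    (hconn : gdist X p q ≠ ⊤)
    {k : ℕ} (π : Fin (k + 1) → EuclideanSpace ℝ (Fin d))
    (hmem : ∀ i, π i ∈ X) (hR : ∀ i, π i ∈ R)
    (h0 : π 0 = p) (hlast : π (Fin.last k) = q)
    (hstep : ∀ i : Fin k, dist (π i.castSucc) (π i.succ) ≤ 1)
    (hgeo : (k : ℕ∞) = gdist X p q) :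
    (k : ENNReal) ≤
      (2 ^ (d + 1) / volume (Metric.ball (0 : EuclideanSpace ℝ (Fin d)) (1 / 2))) *
        volume (R + Metric.ball (0 : EuclideanSpace ℝ (Fin d)) (1 / 2)) :=
  geodesic_length_le_volume_general X R p q π hmem hR h0 hlast hstep hgeo
end

section
/- Let X ⊂ ℝ^d be locally finite, x ∈ ℝ^d, M ≥ 1, and D̃(Y) := min( M‖x‖, inf over connected p,q ∈ Y of [d_{G(Y)}(p,q) + M(‖p‖ + ‖x−q‖)] ) for finite-intersection point sets Y. Suppose D̃(X) < M‖x‖ is realized by (0̃, x̃) and a geodesic π̃, and let q be a vertex of π̃ with ‖q − 0̃‖ ≤ M. Let π' be the subpath of π̃ from the successor s(q) of q to x̃. Then D̃(X \ {q}) ≤ M‖s(q)‖ + |π'| + M‖x̃ − x‖ ≤ M(M+1) + D̃(X). -/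
open MeasureTheory

private lemma path_mk_eq {d n : ℕ} (π : Fin (n+1) → EuclideanSpace ℝ (Fin d))
    {u v : ℕ} (hu : u < n+1) (hv : v < n+1) (h : u = v) :
    π ⟨u, hu⟩ = π ⟨v, hv⟩ := by subst h; rfl

private lemma geodesic_inj {d n : ℕ} {S : Set (EuclideanSpace ℝ (Fin d))}
    {p q : EuclideanSpace ℝ (Fin d)}
    (π : Fin (n+1) → EuclideanSpace ℝ (Fin d))
    (hmem : ∀ j, π j ∈ S) (h0 : π 0 = p) (hlast : π (Fin.last n) = q)
    (hstep : ∀ (u : ℕ) (hu : u < n),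
      dist (π ⟨u, Nat.lt_succ_of_lt hu⟩) (π ⟨u+1, Nat.succ_lt_succ hu⟩) ≤ 1)
    (hgeo : (n : ℕ∞) ≤ gdist S p q)
    (a b : ℕ) (ha : a < n + 1) (hb : b < n + 1) (hab : a < b)
    (heq : π ⟨a, ha⟩ = π ⟨b, hb⟩) : False := by
  classical
  set L := n - (b - a) with hLdef
  have hLn : L + (b - a) = n := by omega
  have hLlt : L < n := by omega
  let c : Fin (L + 1) → EuclideanSpace ℝ (Fin d) := fun m =>
    π ⟨(if (m : ℕ) ≤ a then (m : ℕ) else (m : ℕ) + (b - a)) % (n + 1),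
      Nat.mod_lt _ (Nat.succ_pos n)⟩
  have hcle : ∀ (m : Fin (L+1)) (hm : (m : ℕ) ≤ a), c m = π ⟨(m : ℕ), by omega⟩ := by
    intro m hm
    show π _ = π _
    exact path_mk_eq π _ _ (by rw [if_pos hm]; exact Nat.mod_eq_of_lt (by omega))
  have hcgt : ∀ (m : Fin (L+1)) (hm : ¬ (m : ℕ) ≤ a),
      c m = π ⟨(m : ℕ) + (b - a), by have := m.isLt; omega⟩ := by
    intro m hm
    show π _ = π _
    exact path_mk_eq π _ _ (by rw [if_neg hm]; exact Nat.mod_eq_of_lt (by have := m.isLt; omega))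
  have hle : gdist S p q ≤ (L : ℕ∞) := by
    apply sInf_le
    refine ⟨L, c, rfl, ?_, ?_, fun m => hmem _, ?_⟩
    · rw [hcle 0 (by simp)]
      rw [← h0]
      exact path_mk_eq π _ _ (by simp)
    · by_cases hc : L ≤ a
      · have hLa : L = a := by omega
        have hbn : b = n := by omega
        rw [hcle (Fin.last L) (by simpa using hc), ← hlast]
        calc π ⟨((Fin.last L : Fin (L+1)) : ℕ), _⟩ = π ⟨a, ha⟩ :=
              path_mk_eq π _ _ (by simpa using hLa)
          _ = π ⟨b, hb⟩ := heq
          _ = π (Fin.last n) := path_mk_eq π _ _ (by omega)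
      · rw [hcgt (Fin.last L) (by simpa using hc), ← hlast]
        exact path_mk_eq π _ _ (by simpa using hLn)
    · intro m
      have hm := m.isLt
      rcases lt_trichotomy ((m : ℕ)) a with h | h | h
      · rw [hcle m.castSucc (by simpa using h.le),
          hcle m.succ (by simpa using h)]
        exact hstep (m : ℕ) (by omega)
      · have e1 : c m.castSucc = π ⟨b, hb⟩ := by
          rw [hcle m.castSucc (by simpa using h.le)]
          exact (path_mk_eq π _ _ (by simpa using h)).trans heq
        have hbn : b < n := by omega
        have e2 : c m.succ = π ⟨b + 1, by omega⟩ := by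
          rw [hcgt m.succ (by simp; omega)]
          exact path_mk_eq π _ _ (by simp; omega)
        rw [e1, e2]
        exact hstep b hbn
      · have e1 : c m.castSucc = π ⟨(m : ℕ) + (b - a), by omega⟩ := by
          rw [hcgt m.castSucc (by simp; omega)]
          exact path_mk_eq π _ _ (by simp)
        have e2 : c m.succ = π ⟨(m : ℕ) + (b - a) + 1, by omega⟩ := by
          rw [hcgt m.succ (by simp; omega)]
          exact path_mk_eq π _ _ (by simp; omega)
        rw [e1, e2]
        exact hstep ((m : ℕ) + (b - a)) (by omega)
  have : (n : ℕ∞) ≤ (L : ℕ∞) := le_trans hgeo hle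
  have : n ≤ L := Nat.cast_le.mp this
  omega

/-- Bypass bound near the start point of the geodesic: if `D̃(X) < M‖x‖` is realized by the
pair `(0̃, x̃)` and a geodesic `π̃`, and `q` is a vertex of `π̃` with `‖q - 0̃‖ ≤ M`, then,
with `s(q)` the successor of `q` on `π̃` and `π'` the tail subpath of `π̃` from `s(q)` to
`x̃`, one has `D̃(X \ {q}) ≤ M‖s(q)‖ + |π'| + M‖x̃ - x‖ ≤ M(M+1) + D̃(X)`. -/
theorem Dtil_remove_point_near_start
    {d : ℕ} (X : Set (EuclideanSpace ℝ (Fin d)))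
    (hloc : ∀ A : Set (EuclideanSpace ℝ (Fin d)), Bornology.IsBounded A → (X ∩ A).Finite)
    (x : EuclideanSpace ℝ (Fin d)) (M : ℝ) (hM : 1 ≤ M)
    (z0 zx : EuclideanSpace ℝ (Fin d)) (hz0 : z0 ∈ X) (hzx : zx ∈ X)
    (hconn : gdist X z0 zx ≠ ⊤)
    (hmin : Dtil x M X = ((gdist X z0 zx).toNat : ℝ) + M * (‖z0‖ + ‖x - zx‖))
    (hlt : Dtil x M X < M * ‖x‖)
    {n : ℕ} (π : Fin (n + 1) → EuclideanSpace ℝ (Fin d))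
    (hmem : ∀ j, π j ∈ X)
    (h0 : π 0 = z0) (hlast : π (Fin.last n) = zx)
    (hstep : ∀ j : Fin n, dist (π j.castSucc) (π j.succ) ≤ 1)
    (hgeo : (n : ℕ∞) = gdist X z0 zx)
    (i : Fin n) (hnear : ‖π i.castSucc - z0‖ ≤ M) :
    Dtil x M (X \ {π i.castSucc}) ≤
        M * ‖π i.succ‖ + ((n - ((i : ℕ) + 1) : ℕ) : ℝ) + M * ‖x - zx‖ ∧
      M * ‖π i.succ‖ + ((n - ((i : ℕ) + 1) : ℕ) : ℝ) + M * ‖x - zx‖ ≤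
        M * (M + 1) + Dtil x M X := by
  classical
  have hM0 : (0:ℝ) ≤ M := by linarith
  have hstep' : ∀ (u : ℕ) (hu : u < n),
      dist (π ⟨u, Nat.lt_succ_of_lt hu⟩) (π ⟨u+1, Nat.succ_lt_succ hu⟩) ≤ 1 :=
    fun u hu => hstep ⟨u, hu⟩
  have hgeo' : (n : ℕ∞) ≤ gdist X z0 zx := le_of_eq hgeo
  have hiv : ((i : ℕ)) < n := i.isLt
  have hinj : ∀ (b : ℕ) (hb : b < n + 1), (i:ℕ) < b → π i.castSucc ≠ π ⟨b, hb⟩ := by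
    intro b hb hib hne
    exact geodesic_inj π hmem h0 hlast hstep' hgeo' (i:ℕ) b (by omega) hb hib hne
  set k := n - ((i:ℕ) + 1) with hk
  have hkn : k + ((i:ℕ) + 1) = n := by omega
  let c : Fin (k + 1) → EuclideanSpace ℝ (Fin d) := fun m =>
    π ⟨(m : ℕ) + (i : ℕ) + 1, by have := m.isLt; omega⟩
  have hcmem : ∀ m, c m ∈ X \ {π i.castSucc} := by
    intro m
    refine ⟨hmem _, ?_⟩
    simp only [Set.mem_singleton_iff]
    intro hmm
    exact hinj ((m:ℕ) + (i:ℕ) + 1) (by have := m.isLt; omega) (by omega) hmm.symm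
  have hc0 : c 0 = π i.succ := by
    show π _ = π _
    exact path_mk_eq π _ _ (by simp)
  have hclast : c (Fin.last k) = zx := by
    show π _ = zx
    rw [← hlast]
    exact path_mk_eq π _ _ (by simpa [Nat.add_assoc] using hkn)
  have hcstep : ∀ m : Fin k, dist (c m.castSucc) (c m.succ) ≤ 1 := by
    intro m
    have hm := m.isLt
    have e2 : c m.succ = π ⟨(m:ℕ) + (i:ℕ) + 1 + 1, by omega⟩ := by
      show π _ = π _
      exact path_mk_eq π _ _ (by simp; omega)
    rw [e2]
    exact hstep' ((m:ℕ) + (i:ℕ) + 1) (by omega)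
  have hgle : gdist (X \ {π i.castSucc}) (π i.succ) zx ≤ (k : ℕ∞) :=
    sInf_le ⟨k, c, rfl, hc0, hclast, hcmem, hcstep⟩
  have hne : gdist (X \ {π i.castSucc}) (π i.succ) zx ≠ ⊤ :=
    ne_top_of_le_ne_top (WithTop.coe_ne_top) hgle
  have htoNat : ((gdist (X \ {π i.castSucc}) (π i.succ) zx).toNat : ℝ) ≤ (k : ℝ) := by
    have h1 : (gdist (X \ {π i.castSucc}) (π i.succ) zx).toNat ≤ k := by
      lift gdist (X \ {π i.castSucc}) (π i.succ) zx to ℕ using hne with g hg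
      simpa using Nat.cast_le.mp hgle
    exact_mod_cast h1
  have hs_mem : π i.succ ∈ X \ {π i.castSucc} := by
    refine ⟨hmem _, ?_⟩
    simp only [Set.mem_singleton_iff]
    intro h
    exact hinj ((i:ℕ) + 1) (by omega) (by omega) h.symm
  have hzx_mem : zx ∈ X \ {π i.castSucc} := by
    refine ⟨hzx, ?_⟩
    simp only [Set.mem_singleton_iff]
    intro h
    apply hinj n (by omega) hiv
    rw [show (⟨n, by omega⟩ : Fin (n+1)) = Fin.last n from rfl, hlast]
    exact h.symm
  have hbdd : BddBelow (insert (M * ‖x‖)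
      {r : ℝ | ∃ p ∈ X \ {π i.castSucc}, ∃ q ∈ X \ {π i.castSucc},
        gdist (X \ {π i.castSucc}) p q ≠ ⊤ ∧
        r = ((gdist (X \ {π i.castSucc}) p q).toNat : ℝ) + M * (‖p‖ + ‖x - q‖)}) := by
    refine ⟨0, ?_⟩
    rintro r (rfl | ⟨p, _, q', _, _, rfl⟩)
    · exact mul_nonneg hM0 (norm_nonneg _)
    · exact add_nonneg (Nat.cast_nonneg _)
        (mul_nonneg hM0 (add_nonneg (norm_nonneg _) (norm_nonneg _)))
  have hle1 : Dtil x M (X \ {π i.castSucc}) ≤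
      ((gdist (X \ {π i.castSucc}) (π i.succ) zx).toNat : ℝ)
        + M * (‖π i.succ‖ + ‖x - zx‖) := by
    unfold Dtil
    exact csInf_le hbdd (Set.mem_insert_of_mem _ ⟨π i.succ, hs_mem, zx, hzx_mem, hne, rfl⟩)
  constructor
  · refine le_trans hle1 ?_
    have := mul_add M ‖π i.succ‖ ‖x - zx‖
    linarith
  · have hDX : Dtil x M X = (n : ℝ) + M * (‖z0‖ + ‖x - zx‖) := by
      rw [hmin, ← hgeo, ENat.toNat_coe]
    have h1 : ‖π i.succ‖ ≤ ‖z0‖ + M + 1 := by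
      have a1 : ‖π i.succ‖ - ‖π i.castSucc‖ ≤ ‖π i.succ - π i.castSucc‖ :=
        norm_sub_norm_le _ _
      have a2 : ‖π i.succ - π i.castSucc‖ ≤ 1 := by
        rw [← dist_eq_norm, dist_comm]; exact hstep i
      have a3 : ‖π i.castSucc‖ - ‖z0‖ ≤ ‖π i.castSucc - z0‖ := norm_sub_norm_le _ _
      linarith
    have hk_le : (k : ℝ) ≤ (n : ℝ) := Nat.cast_le.mpr (by omega)
    have h2 : M * ‖π i.succ‖ ≤ M * (‖z0‖ + M + 1) := mul_le_mul_of_nonneg_left h1 hM0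
    rw [hDX]
    nlinarith [mul_add M ‖z0‖ ‖x - zx‖]
end
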